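/- arXiv:1105.3833 — 6 statements merged into one kernel-verified Lean document; each statement's English description precedes it below -/
import Mathlib

section
/- Let Base be a finite set of B atoms and E : Base → [0,1] with E(a) ≥ 1/2 for all a (the evidence of each typical atom). Define ER(mtm) = 1 - (1/B)∑_a E(a) and ER(rand) = (2/B)∑_a E(a)(1 - E(a)). Then ER(rand) ≥ ER(mtm), with ER(rand)/ER(mtm) → 2 as the average evidence tends to 1 along sequences where all E(a) are equal. -/
/-!
Atomwise, `1 - e ≤ 2 e (1 - e)` is `(1 - e)(2e - 1) ≥ 0`, which holds for `1/2 ≤ e ≤ 1`;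
averaging over the atoms gives `ER(rand) ≥ ER(mtm)`. For equal evidence `e < 1` the ratio
`2e(1 - e)/(1 - e)` is just `2e`, which tends to `2` as `e → 1`.
-/

open Filter Topology

lemma one_sub_le_two_mul_mul_one_sub {e : ℝ} (h_half : 1 / 2 ≤ e) (h_one : e ≤ 1) :
    1 - e ≤ 2 * (e * (1 - e)) := by
  nlinarith [mul_nonneg (sub_nonneg.2 h_one) (sub_nonneg.2 h_half)]

lemma one_sub_mean_eq_mean_one_sub {ι : Type*} [Fintype ι] [Nonempty ι] (f : ι → ℝ) :
    1 - (1 / (Fintype.card ι : ℝ)) * ∑ i, f i = (1 / (Fintype.card ι : ℝ)) * ∑ i, (1 - f i) := by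
  have hcard : (Fintype.card ι : ℝ) ≠ 0 := by exact_mod_cast Fintype.card_ne_zero
  rw [Finset.sum_sub_distrib, Finset.sum_const, Finset.card_univ, nsmul_eq_mul, mul_one]
  field_simp

lemma one_sub_mean_le_two_mul_mean_mul_one_sub {ι : Type*} [Fintype ι] [Nonempty ι]
    (E : ι → ℝ) (hE : ∀ i, 1 / 2 ≤ E i ∧ E i ≤ 1) :
    1 - (1 / (Fintype.card ι : ℝ)) * ∑ i, E i ≤
      (2 / (Fintype.card ι : ℝ)) * ∑ i, E i * (1 - E i) := by
  have h_pos : (0 : ℝ) ≤ 1 / (Fintype.card ι : ℝ) := by positivity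
  calc 1 - (1 / (Fintype.card ι : ℝ)) * ∑ i, E i
      = (1 / (Fintype.card ι : ℝ)) * ∑ i, (1 - E i) := one_sub_mean_eq_mean_one_sub E
    _ ≤ (1 / (Fintype.card ι : ℝ)) * ∑ i, 2 * (E i * (1 - E i)) :=
        mul_le_mul_of_nonneg_left (Finset.sum_le_sum fun i _ =>
          one_sub_le_two_mul_mul_one_sub (hE i).1 (hE i).2) h_pos
    _ = (2 / (Fintype.card ι : ℝ)) * ∑ i, E i * (1 - E i) := by
        rw [← Finset.mul_sum]; ring

lemma tendsto_two_mul_mul_one_sub_div_one_sub :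
    Tendsto (fun e : ℝ => (2 * e * (1 - e)) / (1 - e)) (𝓝[≠] 1) (𝓝 2) := by
  have h_lin : Tendsto (fun e : ℝ => 2 * e) (𝓝[≠] 1) (𝓝 2) := by
    simpa using (tendsto_id.const_mul (2 : ℝ)).mono_left (nhdsWithin_le_nhds (a := (1 : ℝ)))
  refine h_lin.congr' (eventually_nhdsWithin_of_forall fun e (he : e ≠ 1) => ?_)
  show 2 * e = 2 * e * (1 - e) / (1 - e)
  rw [mul_div_assoc, div_self (sub_ne_zero.2 he.symm), mul_one]

theorem stmt_6 {Base : Type*} [Fintype Base] [Nonempty Base]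
    (E : Base → ℝ) (hE : ∀ a, 1 / 2 ≤ E a ∧ E a ≤ 1) :
    (2 / (Fintype.card Base : ℝ)) * ∑ a, E a * (1 - E a) ≥
      1 - (1 / (Fintype.card Base : ℝ)) * ∑ a, E a ∧
    Filter.Tendsto (fun e : ℝ => (2 * e * (1 - e)) / (1 - e))
      (nhdsWithin 1 (Set.Iio 1)) (nhds 2) :=
  ⟨one_sub_mean_le_two_mul_mean_mul_one_sub E hE,
    tendsto_two_mul_mul_one_sub_div_one_sub.mono_left
      (nhdsWithin_mono _ fun _ he => ne_of_lt he)⟩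
end

section
/- For every model m of a finite consistent system S there exists a typical model μ of S with ER(μ) ≤ ER(m). -/
open Classical in
theorem stmt_10 {Base : Type*} [Fintype Base] [Nonempty Base]
    (MOD : Finset (Base → Bool)) (hMOD : MOD.Nonempty)
    (E : Base → ℝ)
    (hEdef : ∀ a, E a = ((MOD.filter (fun m => m a = true)).card : ℝ) / MOD.card)
    (t : Base → Bool) (ht : ∀ a, t a = true ↔ 1 / 2 ≤ E a)
    (T : (Base → Bool) → Finset Base)
    (hT : ∀ m, T m = Finset.univ.filter (fun a => m a = t a))
    (ER : (Base → Bool) → ℝ)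
    (hER : ∀ m, ER m = 1 - (1 / (Fintype.card Base : ℝ)) *
      ∑ a, (if m a = true then E a else 1 - E a)) :
    ∀ m ∈ MOD, ∃ μ ∈ MOD, (∀ m' ∈ MOD, ¬ T μ ⊂ T m') ∧ ER μ ≤ ER m := by
  intro m hm
  set s := MOD.filter (fun m' => T m ⊆ T m') with hs
  have hms : m ∈ s := by
    simp [hs, hm]
  obtain ⟨μ, hμs, hmax⟩ := s.exists_max_image (fun x => (T x).card) ⟨m, hms⟩
  have hμMOD : μ ∈ MOD := (Finset.mem_filter.mp hμs).1
  have hTm : T m ⊆ T μ := (Finset.mem_filter.mp hμs).2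
  refine ⟨μ, hμMOD, ?_, ?_⟩
  · intro m' hm' hss
    have hm's : m' ∈ s := Finset.mem_filter.mpr ⟨hm', hTm.trans hss.subset⟩
    have := hmax m' hm's
    have hlt := Finset.card_lt_card hss
    omega
  · -- termwise comparison
    have key : ∀ a, (if m a = true then E a else 1 - E a)
        ≤ (if μ a = true then E a else 1 - E a) := by
      intro a
      by_cases hma : m a = t a
      · have haT : a ∈ T m := by simp [hT, hma]
        have haTμ : a ∈ T μ := hTm haT
        have hμa : μ a = t a := by simpa [hT] using haTμ
        rw [hμa, hma]
      · by_cases hμa : μ a = m a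
        · rw [hμa]
        · have hμt : μ a = t a := by
            cases h1 : μ a <;> cases h2 : m a <;> cases h3 : t a <;>
              simp_all
          cases h3 : t a with
          | true =>
            have hE : 1 / 2 ≤ E a := (ht a).mp h3
            have hmf : m a = false := by
              cases h2 : m a <;> simp_all
            rw [hμt, h3, hmf]
            simp only [Bool.false_eq_true, if_false, if_true]
            linarith
          | false =>
            have hE : ¬ (1 / 2 ≤ E a) := fun h => by simp [(ht a).mpr h] at h3
            have hmf : m a = true := by
              cases h2 : m a <;> simp_all
            rw [hμt, h3, hmf]
            simp only [Bool.false_eq_true, if_false, if_true]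
            linarith
    have hsum : ∑ a, (if m a = true then E a else 1 - E a)
        ≤ ∑ a, (if μ a = true then E a else 1 - E a) :=
      Finset.sum_le_sum (fun a _ => key a)
    have hc : (0:ℝ) ≤ 1 / (Fintype.card Base : ℝ) := by positivity
    rw [hER μ, hER m]
    have := mul_le_mul_of_nonneg_left hsum hc
    linarith
end

section
/- Let S be a consistent propositional system and â a kernel atom of S, i.e., every model of S containing ¬â has an a-neighbor (a model differing only in the value of a) that is a model of S containing â. Then for every literal l ≠ ¬â consistent with S, l is consistent with S ∪ {â}. -/
theorem stmt_11 {Base : Type*} [DecidableEq Base]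
    (MOD : Set (Base → Bool)) (hcons : MOD.Nonempty)
    (a : Base) (v : Bool)
    (hker : ∀ m ∈ MOD, m a ≠ v → Function.update m a v ∈ MOD)
    (b : Base) (w : Bool) (hne : ¬ (b = a ∧ w = !v))
    (hl : ∃ m ∈ MOD, m b = w) :
    ∃ m ∈ MOD, m b = w ∧ m a = v := by
  obtain ⟨m, hm, hb⟩ := hl
  by_cases hma : m a = v
  · exact ⟨m, hm, hb, hma⟩
  · refine ⟨Function.update m a v, hker m hm hma, ?_, by simp⟩
    rcases eq_or_ne b a with rfl | hba
    · exact absurd ⟨rfl, by rw [← hb]; cases m b <;> cases v <;> simp_all⟩ hne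
    · simpa [Function.update_of_ne hba] using hb
end

section
/- Let S be a consistent propositional system and let tk(S) be the set of kernel atoms of S (typical atoms â such that every model of S containing ¬â has an a-neighbor model of S containing â). Then S ∪ tk(S) is consistent: there is a model of S satisfying every kernel atom. -/
theorem stmt_12 {Base : Type*} [Fintype Base] [DecidableEq Base]
    (MOD : Set (Base → Bool)) (hcons : MOD.Nonempty)
    (K : Set Base) (t : Base → Bool)
    (hker : ∀ a ∈ K, ∀ m ∈ MOD, m a ≠ t a → Function.update m a (t a) ∈ MOD) :
    ∃ m ∈ MOD, ∀ a ∈ K, m a = t a := by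
  classical
  obtain ⟨m0, hm0⟩ := hcons
  suffices h : ∀ n (m : Base → Bool), m ∈ MOD →
      (Finset.univ.filter (fun a => a ∈ K ∧ m a ≠ t a)).card ≤ n →
      ∃ m' ∈ MOD, ∀ a ∈ K, m' a = t a from h _ m0 hm0 le_rfl
  intro n
  induction n with
  | zero =>
    intro m hm hc
    refine ⟨m, hm, fun a ha => ?_⟩
    by_contra hne
    have : a ∈ Finset.univ.filter (fun a => a ∈ K ∧ m a ≠ t a) := by
      simp [ha, hne]
    simp [Finset.card_eq_zero.mp (Nat.le_zero.mp hc)] at this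
  | succ n ih =>
    intro m hm hc
    by_cases hall : ∀ a ∈ K, m a = t a
    · exact ⟨m, hm, hall⟩
    · push_neg at hall
      obtain ⟨a, haK, hne⟩ := hall
      have hmem : a ∈ Finset.univ.filter (fun a => a ∈ K ∧ m a ≠ t a) := by
        simp [haK, hne]
      have hm' := hker a haK m hm hne
      refine ih (Function.update m a (t a)) hm' (Nat.lt_succ_iff.mp ?_)
      have hsub : (Finset.univ.filter (fun b => b ∈ K ∧ Function.update m a (t a) b ≠ t b)) ⊆
          (Finset.univ.filter (fun b => b ∈ K ∧ m b ≠ t b)).erase a := by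
        intro b hb
        simp only [Finset.mem_filter, Finset.mem_univ, true_and] at hb
        rcases eq_or_ne b a with rfl | hba
        · simp [Function.update_self] at hb
        · rw [Function.update_of_ne hba] at hb
          simp [Finset.mem_erase, hba, hb]
      calc _ ≤ ((Finset.univ.filter (fun b => b ∈ K ∧ m b ≠ t b)).erase a).card :=
              Finset.card_le_card hsub
        _ < (Finset.univ.filter (fun b => b ∈ K ∧ m b ≠ t b)).card :=
              Finset.card_erase_lt_of_mem hmem
        _ ≤ n + 1 := hc
end

section
/- Every typical model of S contains all kernel atoms of S: if m is a model of S such that no model m' of S has T(m) ⊊ T(m'), then every kernel atom â satisfies â ∈ m. -/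
theorem stmt_13 {Base : Type*} [Fintype Base] [DecidableEq Base]
    (MOD : Set (Base → Bool)) (t : Base → Bool)
    (T : (Base → Bool) → Finset Base)
    (hT : ∀ m, T m = Finset.univ.filter (fun a => m a = t a))
    (m : Base → Bool) (hm : m ∈ MOD)
    (htyp : ∀ m' ∈ MOD, ¬ T m ⊂ T m')
    (a : Base)
    (hker : ∀ m' ∈ MOD, m' a ≠ t a → Function.update m' a (t a) ∈ MOD) :
    m a = t a := by
  by_contra h
  have hμ := hker m hm h
  refine htyp _ hμ ?_
  constructor
  · intro b hb
    simp [hT] at hb ⊢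
    rcases eq_or_ne b a with rfl | hba
    · exact absurd hb h
    · simpa [Function.update_of_ne hba] using hb
  · intro hsub
    have : a ∈ T m := hsub (by simp [hT])
    simp [hT] at this
    exact h this
end

section
/- Let â be a kernel atom of S, and let φ be a formula consistent with S whose truth value does not depend on atom a (i.e., φ is invariant under flipping a). Then â is a kernel atom of S' = S ∪ {φ}. -/
/-!
Flipping `a` to `v` maps the models of `S ∪ {φ}` with `m a ≠ v` back into `S ∪ {φ}`: into the
models of `S` because `â` is a kernel atom of `S`, and into `φ` because `φ` does not see `a`.
Over `Bool` this flip is injective on `{m | m a ≠ v}`, since all such `m` agree at `a`; it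
therefore also injects the models with `m a ≠ v` into those with `m a = v`.
-/

namespace Function

variable {α : Type*} [DecidableEq α]

theorem update_not_apply_of_ne {m : α → Bool} {a : α} {v : Bool} (h : m a ≠ v) :
    update m a (!m a) = update m a v := by
  rw [Bool.not_eq_eq_eq_not.mpr (Bool.eq_not_of_ne h)]

theorem injOn_update_of_apply_ne (a : α) (v : Bool) :
    Set.InjOn (fun m : α → Bool => update m a v) {m | m a ≠ v} := by
  intro m hm m' hm' heq
  have hmm' : m a = m' a := by
    rw [Bool.eq_not_of_ne hm, Bool.eq_not_of_ne hm']
  calc m = update (update m a v) a (m a) := by simp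
    _ = update (update m' a v) a (m' a) := by rw [show update m a v = update m' a v from heq, hmm']
    _ = m' := by simp

end Function

section KernelAtom

variable {α : Type*} [DecidableEq α]

open Function

theorem update_mem_inter_of_update_mem [DecidableEq (α → Bool)] {S φ : Finset (α → Bool)}
    {a : α} {v : Bool}
    (hker : ∀ m ∈ S, m a ≠ v → update m a v ∈ S)
    (hφ : ∀ m : α → Bool, m ∈ φ ↔ update m a (!m a) ∈ φ) :
    ∀ m ∈ S ∩ φ, m a ≠ v → update m a v ∈ S ∩ φ := by
  intro m hm hne
  rw [Finset.mem_inter] at hm ⊢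
  exact ⟨hker m hm.1 hne, update_not_apply_of_ne hne ▸ (hφ m).1 hm.2⟩

theorem card_filter_ne_le_card_filter_eq_of_update_mem {S : Finset (α → Bool)} {a : α} {v : Bool}
    (hker : ∀ m ∈ S, m a ≠ v → update m a v ∈ S) :
    (S.filter (fun m => m a ≠ v)).card ≤ (S.filter (fun m => m a = v)).card := by
  refine Finset.card_le_card_of_injOn (fun m => update m a v) ?_ ?_
  · intro m hm
    rw [Finset.mem_coe, Finset.mem_filter] at hm ⊢
    exact ⟨hker m hm.1 hm.2, update_self a v m⟩
  · exact (injOn_update_of_apply_ne a v).mono fun m hm => (Finset.mem_filter.mp hm).2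

end KernelAtom

theorem stmt_14_general {Base : Type*} [Fintype Base] [DecidableEq Base]
    (MODS : Finset (Base → Bool)) (φm : Finset (Base → Bool))
    (a : Base) (v : Bool)
    (hker : ∀ m ∈ MODS, m a ≠ v → Function.update m a v ∈ MODS)
    (hφindep : ∀ m : Base → Bool, m ∈ φm ↔ Function.update m a (! m a) ∈ φm) :
    (∀ m ∈ MODS ∩ φm, m a ≠ v → Function.update m a v ∈ MODS ∩ φm) ∧
    ((MODS ∩ φm).filter (fun m => m a ≠ v)).card ≤
      ((MODS ∩ φm).filter (fun m => m a = v)).card := by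
  have hkerφ := update_mem_inter_of_update_mem hker hφindep
  exact ⟨hkerφ, card_filter_ne_le_card_filter_eq_of_update_mem hkerφ⟩

theorem stmt_14 {Base : Type*} [Fintype Base] [DecidableEq Base]
    (MODS : Finset (Base → Bool)) (φm : Finset (Base → Bool))
    (a : Base) (v : Bool)
    (htyp : (MODS.filter (fun m => m a ≠ v)).card ≤ (MODS.filter (fun m => m a = v)).card)
    (hker : ∀ m ∈ MODS, m a ≠ v → Function.update m a v ∈ MODS)
    (hφcons : ∃ m ∈ MODS, m ∈ φm)
    (hφindep : ∀ m : Base → Bool, m ∈ φm ↔ Function.update m a (! m a) ∈ φm) :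
    (∀ m ∈ MODS ∩ φm, m a ≠ v → Function.update m a v ∈ MODS ∩ φm) ∧
    ((MODS ∩ φm).filter (fun m => m a ≠ v)).card ≤
      ((MODS ∩ φm).filter (fun m => m a = v)).card :=
  stmt_14_general MODS φm a v hker hφindep
end
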